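/- Let A(t) be a fanning frame with horizontal derivative H(t) = Ȧ(t) − (1/2)F(t)Ä(t) and Jacobi endomorphism K(t) = F̈(t)²/4. Then K(t)H(t) = (1/2)H(t){A(t),t}; hence in the basis of ℝ^{2n} given by the columns of (A(t)|H(t)), the matrix of K(t) is block-diagonal with both blocks equal to {A(t),t}/2. -/

import Mathlib

open Matrix
noncomputable section

/-- `MDeriv A A'` says that `A'` is the entrywise derivative of the matrix curve `A`. -/
def MDeriv {m k : Type*} (A A' : ℝ → Matrix m k ℝ) : Prop :=
  ∀ (i : m) (j : k) (t : ℝ), HasDerivAt (fun s => A s i j) (A' t i j) t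

lemma MDeriv.mul {m k l : Type*} [Fintype k] {A A' : ℝ → Matrix m k ℝ}
    {B B' : ℝ → Matrix k l ℝ} (hA : MDeriv A A') (hB : MDeriv B B') :
    MDeriv (fun t => A t * B t) (fun t => A' t * B t + A t * B' t) := by
  intro i j t
  have h : HasDerivAt (fun s => ∑ x, A s i x * B s x j)
      (∑ x, (A' t i x * B t x j + A t i x * B' t x j)) t :=
    HasDerivAt.fun_sum fun x _ => (hA i x t).mul (hB x j t)
  simpa [Matrix.mul_apply, Matrix.add_apply, Finset.sum_add_distrib] using h

lemma MDeriv.add {m k : Type*} {A A' B B' : ℝ → Matrix m k ℝ}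
    (hA : MDeriv A A') (hB : MDeriv B B') :
    MDeriv (fun t => A t + B t) (fun t => A' t + B' t) := by
  intro i j t
  simpa [Matrix.add_apply] using (hA i j t).fun_add (hB i j t)

lemma MDeriv.neg {m k : Type*} {A A' : ℝ → Matrix m k ℝ} (hA : MDeriv A A') :
    MDeriv (fun t => -(A t)) (fun t => -(A' t)) := by
  intro i j t
  simpa [Matrix.neg_apply] using (hA i j t).fun_neg

lemma MDeriv.const {m k : Type*} (C : Matrix m k ℝ) :
    MDeriv (fun _ => C) (fun _ => 0) := by
  intro i j t
  simpa using hasDerivAt_const t (C i j)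

lemma MDeriv.unique {m k : Type*} {A A₁ A₂ : ℝ → Matrix m k ℝ}
    (h1 : MDeriv A A₁) (h2 : MDeriv A A₂) : ∀ t, A₁ t = A₂ t := by
  intro t
  ext i j
  exact (h1 i j t).unique (h2 i j t)

/-- with `H(t) = Ȧ(t) - (1/2)F(t)Ä(t)` the horizontal derivative and
`K(t) = F̈(t)²/4` the Jacobi endomorphism, `K H = (1/2) H {A,t}`; consequently in
the basis formed by the columns of `(A(t)|H(t))` the matrix of `K(t)` is block
diagonal with both diagonal blocks equal to `{A(t),t}/2`. -/
theorem stmt9 {n : ℕ} (A A' A'' : ℝ → Matrix (Fin n ⊕ Fin n) (Fin n) ℝ)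
    (P P' Q : ℝ → Matrix (Fin n) (Fin n) ℝ)
    (F F' F'' : ℝ → Matrix (Fin n ⊕ Fin n) (Fin n ⊕ Fin n) ℝ)
    (hA : MDeriv A A') (hA' : MDeriv A' A'')
    (hAf : ∀ t, IsUnit (fromCols (A t) (A' t)))
    (hPQ : ∀ t, A'' t + A' t * P t + A t * Q t = 0)
    (hP' : MDeriv P P')
    (hF : ∀ t, F t * A t = 0 ∧ F t * A' t = A t)
    (hF' : MDeriv F F') (hF'' : MDeriv F' F'') :
    ∀ t,
      ((4⁻¹ : ℝ) • (F'' t * F'' t)) * (A' t - (2⁻¹ : ℝ) • (F t * A'' t))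
        = (2⁻¹ : ℝ) • ((A' t - (2⁻¹ : ℝ) • (F t * A'' t))
            * ((2 : ℝ) • Q t - (2⁻¹ : ℝ) • (P t * P t) - P' t)) ∧
      ((4⁻¹ : ℝ) • (F'' t * F'' t))
          * fromCols (A t) (A' t - (2⁻¹ : ℝ) • (F t * A'' t))
        = fromCols (A t) (A' t - (2⁻¹ : ℝ) • (F t * A'' t))
          * fromBlocks
              ((2⁻¹ : ℝ) • ((2 : ℝ) • Q t - (2⁻¹ : ℝ) • (P t * P t) - P' t)) 0 0
              ((2⁻¹ : ℝ) • ((2 : ℝ) • Q t - (2⁻¹ : ℝ) • (P t * P t) - P' t)) := by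
  -- A'' expressed from P,Q
  have hA''eq : ∀ s, A'' s = -(A' s * P s) - A s * Q s := by
    intro s
    have := hPQ s
    linear_combination (norm := module) this
  -- F s * A'' s = -(A s * P s)
  have h1 : ∀ s, F s * A'' s = -(A s * P s) := by
    intro s
    rw [hA''eq s, Matrix.mul_sub, Matrix.mul_neg, ← Matrix.mul_assoc, ← Matrix.mul_assoc, (hF s).1, (hF s).2, Matrix.zero_mul,
      sub_zero]
  -- differentiate F * A = 0 :  F'A + FA' = 0
  have e1 : ∀ s, F' s * A s + F s * A' s = 0 := by
    have d1 : MDeriv (fun s => F s * A s) (fun s => F' s * A s + F s * A' s) := hF'.mul hA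
    have d2 : MDeriv (fun s => F s * A s) (fun _ => 0) := by
      have : (fun s => F s * A s) = fun _ => (0 : Matrix _ _ ℝ) := funext fun s => (hF s).1
      rw [this]; exact MDeriv.const 0
    exact d1.unique d2
  -- differentiate F * A' = A :  F'A' + FA'' = A'
  have e2 : ∀ s, F' s * A' s + F s * A'' s = A' s := by
    have d1 : MDeriv (fun s => F s * A' s) (fun s => F' s * A' s + F s * A'' s) := hF'.mul hA'
    have d2 : MDeriv (fun s => F s * A' s) A' := by
      have : (fun s => F s * A' s) = A := funext fun s => (hF s).2
      rw [this]; exact hA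
    exact d1.unique d2
  -- F' A = -A
  have e3 : ∀ s, F' s * A s = -(A s) := by
    intro s
    have := e1 s
    rw [(hF s).2] at this
    linear_combination (norm := module) this
  -- F' A' = A' + A P
  have e4 : ∀ s, F' s * A' s = A' s + A s * P s := by
    intro s
    have := e2 s
    rw [h1 s] at this
    linear_combination (norm := module) this
  -- differentiate e3 : F''A + F'A' = -A'
  have e5 : ∀ s, F'' s * A s + F' s * A' s = -(A' s) := by
    have d1 : MDeriv (fun s => F' s * A s) (fun s => F'' s * A s + F' s * A' s) := hF''.mul hA
    have d2 : MDeriv (fun s => F' s * A s) (fun s => -(A' s)) := by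
      have : (fun s => F' s * A s) = fun s => -(A s) := funext fun s => e3 s
      rw [this]; exact hA.neg
    exact d1.unique d2
  -- F'' A = -(2 • A') - A P
  have h2 : ∀ s, F'' s * A s = -((2:ℝ) • A' s) - A s * P s := by
    intro s
    have := e5 s
    rw [e4 s] at this
    linear_combination (norm := module) this
  -- differentiate e4 : F''A' + F'A'' = A'' + A'P + AP'
  have e6 : ∀ s, F'' s * A' s + F' s * A'' s = A'' s + (A' s * P s + A s * P' s) := by
    have d1 : MDeriv (fun s => F' s * A' s) (fun s => F'' s * A' s + F' s * A'' s) :=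
      hF''.mul hA'
    have d2 : MDeriv (fun s => F' s * A' s)
        (fun s => A'' s + (A' s * P s + A s * P' s)) := by
      have : (fun s => F' s * A' s) = fun s => A' s + A s * P s := funext fun s => e4 s
      rw [this]; exact hA'.add (hA.mul hP')
    exact d1.unique d2
  -- F' A'' expanded
  have e7 : ∀ s, F' s * A'' s = -(A' s * P s) - A s * (P s * P s) + A s * Q s := by
    intro s
    rw [hA''eq s, Matrix.mul_sub, Matrix.mul_neg, ← Matrix.mul_assoc, ← Matrix.mul_assoc,
      e3 s, e4 s, Matrix.add_mul, Matrix.mul_assoc, Matrix.neg_mul]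
    module
  -- F'' A' expanded
  have h3 : ∀ s, F'' s * A' s
      = A' s * P s + A s * P' s + A s * (P s * P s) - (2:ℝ) • (A s * Q s) := by
    intro s
    have := e6 s
    rw [e7 s, hA''eq s] at this
    linear_combination (norm := module) this
  intro t
  set S : Matrix (Fin n) (Fin n) ℝ := (2 : ℝ) • Q t - (2⁻¹ : ℝ) • (P t * P t) - P' t with hS
  -- H rewritten
  have hH : A' t - (2⁻¹ : ℝ) • (F t * A'' t) = A' t + (2⁻¹ : ℝ) • (A t * P t) := by
    rw [h1 t]; module
  -- F'' * (A*P)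
  have hFAP : F'' t * (A t * P t) = -((2:ℝ) • (A' t * P t)) - A t * (P t * P t) := by
    rw [← Matrix.mul_assoc, h2 t, Matrix.sub_mul, Matrix.neg_mul, Matrix.smul_mul, Matrix.mul_assoc]
  -- F'' H = -(A * S)
  have hFh : F'' t * (A' t + (2⁻¹ : ℝ) • (A t * P t)) = -(A t * S) := by
    rw [Matrix.mul_add, Matrix.mul_smul, hFAP, h3 t, hS, Matrix.mul_sub, Matrix.mul_sub, Matrix.mul_smul,
      Matrix.mul_smul]
    module
  -- F'' (A * S) = -(2 • ((A' + 2⁻¹ • A P) * S))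
  have hFAS : F'' t * (A t * S) = -((2:ℝ) • ((A' t + (2⁻¹ : ℝ) • (A t * P t)) * S)) := by
    rw [← Matrix.mul_assoc, h2 t, Matrix.sub_mul, Matrix.neg_mul, Matrix.smul_mul, Matrix.add_mul, Matrix.smul_mul,
      Matrix.mul_assoc]
    module
  -- K H = 2⁻¹ • (H * S)
  have key1 : ((4⁻¹ : ℝ) • (F'' t * F'' t)) * (A' t + (2⁻¹ : ℝ) • (A t * P t))
      = (2⁻¹ : ℝ) • ((A' t + (2⁻¹ : ℝ) • (A t * P t)) * S) := by
    rw [Matrix.smul_mul, Matrix.mul_assoc, hFh, Matrix.mul_neg, hFAS]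
    module
  -- K A = 2⁻¹ • (A * S)
  have key2 : ((4⁻¹ : ℝ) • (F'' t * F'' t)) * A t = (2⁻¹ : ℝ) • (A t * S) := by
    have : F'' t * (F'' t * A t) = (2:ℝ) • (A t * S) := by
      rw [h2 t, Matrix.mul_sub, Matrix.mul_neg, Matrix.mul_smul, h3 t, hFAP, hS,
        Matrix.mul_sub, Matrix.mul_sub, Matrix.mul_smul, Matrix.mul_smul]
      module
    rw [Matrix.smul_mul, Matrix.mul_assoc, this]
    module
  constructor
  · rw [hH, key1]
  · rw [hH, mul_fromCols, fromCols_mul_fromBlocks, key1, key2]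
    congr 1 <;> rw [Matrix.mul_smul] <;> simp
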